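/- arXiv:1711.04122 — 2 statements merged into one kernel-verified Lean document; each statement's English description precedes it below -/
import Mathlib

section
/- Let Λ = {λ₁,…,λₙ} be a finite set of distinct real exponents and let G be an equivalence class under ∼* in the set of trigonometric polynomials with exponents in Λ. Then G is sequentially compact with respect to uniform convergence on ℝ: every sequence of trigonometric polynomials in G has a subsequence converging uniformly on ℝ to a trigonometric polynomial in G. -/
/-!
The class of `c` is `{c · v | v ∈ P}`, where `P` is the set of phase vectors
`(e^{iψ(λ_j)})_j` of ℚ-linear maps `ψ`. Writing the `λ_j` as integer combinations
`λ_j = ∑ₖ p_{jk} μ_k` of a ℤ-basis `μ` of the group they generate, `μ` is ℚ-linearly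
independent, so `ψ(μ)` can be prescribed arbitrarily; hence `P` is the image of the torus
`𝕋^r` under the monomial map `w ↦ (∏ₖ w_k^{p_{jk}})_j` and is compact. A convergent
subsequence of phase vectors then gives coefficientwise, and so uniform, convergence.
-/

open Filter Topology

theorem LinearIndependent.exists_linearMap_apply_eq {K V W ι : Type*} [Field K]
    [AddCommGroup V] [Module K V] [AddCommGroup W] [Module K W] {v : ι → V}
    (hv : LinearIndependent K v) (y : ι → W) : ∃ f : V →ₗ[K] W, ∀ i, f (v i) = y i := by
  obtain ⟨f, hf⟩ := LinearMap.exists_extend ((Module.Basis.span hv).constr K y)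
  refine ⟨f, fun i => ?_⟩
  have h := congrArg (· ⟨v i, Submodule.subset_span ⟨i, rfl⟩⟩) hf
  simp only [LinearMap.comp_apply, Submodule.subtype_apply] at h
  rw [h, ← Module.Basis.span_apply hv, Module.Basis.constr_basis]

theorem exists_linearIndependent_zsmul_sum {ι V : Type*} [Finite ι] [AddCommGroup V]
    [Module ℚ V] (lam : ι → V) :
    ∃ (r : ℕ) (μ : Fin r → V) (p : ι → Fin r → ℤ),
      LinearIndependent ℚ μ ∧ ∀ j, lam j = ∑ k, p j k • μ k := by
  have : Module.IsTorsionFree ℤ V := .trans_faithfulSMul ℤ ℚ V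
  set M := Submodule.span ℤ (Set.range lam)
  have : Module.Finite ℤ M := Module.Finite.span_of_finite ℤ (Set.finite_range lam)
  let e := Module.finBasis ℤ M
  have hmem : ∀ j, lam j ∈ M := fun j => Submodule.subset_span ⟨j, rfl⟩
  refine ⟨_, fun k => e k, fun j => e.repr ⟨lam j, hmem j⟩, ?_, fun j => ?_⟩
  · exact (LinearIndependent.iff_fractionRing ℤ ℚ).1
      (e.linearIndependent.map' M.subtype M.ker_subtype)
  · conv_lhs => rw [← Subtype.coe_mk (lam j) (hmem j), ← e.sum_repr ⟨lam j, hmem j⟩]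
    simp only [Submodule.coe_sum, Submodule.coe_smul]

theorem tendstoUniformly_sum_mul_of_tendsto {ι α X R : Type*} [Fintype ι] [SeminormedRing R]
    {l : Filter α} {a : α → ι → R} {b : ι → R} {g : ι → X → R} (hg : ∀ j t, ‖g j t‖ ≤ 1)
    (hab : Tendsto a l (𝓝 b)) :
    TendstoUniformly (fun m t => ∑ j, a m j * g j t) (fun t => ∑ j, b j * g j t) l := by
  have hdist : Tendsto (fun m => ∑ j, ‖b j - a m j‖) l (𝓝 0) := by
    simpa using tendsto_finsetSum Finset.univ fun j _ =>
      (tendsto_const_nhds (x := b j)).sub (tendsto_pi_nhds.1 hab j) |>.norm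
  rw [Metric.tendstoUniformly_iff]
  intro ε hε
  filter_upwards [hdist.eventually (gt_mem_nhds hε)] with m hm t
  calc dist (∑ j, b j * g j t) (∑ j, a m j * g j t)
      = ‖∑ j, (b j - a m j) * g j t‖ := by
        simp only [dist_eq_norm, ← Finset.sum_sub_distrib, sub_mul]
    _ ≤ ∑ j, ‖b j - a m j‖ * ‖g j t‖ :=
        (norm_sum_le _ _).trans (Finset.sum_le_sum fun j _ => norm_mul_le _ _)
    _ ≤ ∑ j, ‖b j - a m j‖ :=
        Finset.sum_le_sum fun j _ => mul_le_of_le_one_right (norm_nonneg _) (hg j t)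
    _ < ε := hm

theorem Circle.exp_sum_zsmul {κ : Type*} (s : Finset κ) (p : κ → ℤ) (x : κ → ℝ) :
    Circle.exp (∑ k ∈ s, p k • x k) = ∏ k ∈ s, Circle.exp (x k) ^ p k := by
  induction s using Finset.cons_induction with
  | empty => simp
  | cons k s hk ih => rw [Finset.sum_cons, Finset.prod_cons, Circle.exp_add, ih, Circle.exp_zsmul]

def rationalPhases {ι : Type*} (lam : ι → ℝ) : Set (ι → Circle) :=
  {v | ∃ ψ : ℝ →ₗ[ℚ] ℝ, ∀ j, v j = Circle.exp (ψ (lam j))}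

theorem isCompact_rationalPhases {ι : Type*} [Finite ι] (lam : ι → ℝ) :
    IsCompact (rationalPhases lam) := by
  obtain ⟨r, μ, p, hμ, hlam⟩ := exists_linearIndependent_zsmul_sum lam
  have hphase : ∀ (ψ : ℝ →ₗ[ℚ] ℝ) j,
      Circle.exp (ψ (lam j)) = ∏ k, Circle.exp (ψ (μ k)) ^ p j k := fun ψ j => by
    simp only [hlam j, map_sum, map_zsmul, Circle.exp_sum_zsmul]
  have hrange :
      rationalPhases lam = Set.range fun (w : Fin r → Circle) j => ∏ k, w k ^ p j k := by
    ext v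
    constructor
    · rintro ⟨ψ, hψ⟩
      exact ⟨fun k => Circle.exp (ψ (μ k)), funext fun j => by rw [hψ, hphase]⟩
    · rintro ⟨w, rfl⟩
      choose y hy using fun k => Circle.exp_surjective (w k)
      obtain ⟨ψ, hψ⟩ := hμ.exists_linearMap_apply_eq y
      exact ⟨ψ, fun j => by simp only [hphase, hψ, hy]⟩
  rw [hrange]
  exact isCompact_range (by fun_prop)

theorem equivalence_class_seq_compact_general
    (n : ℕ) (lam : Fin n → ℝ)
    (c : Fin n → ℂ) (a : ℕ → Fin n → ℂ)
    (ha : ∀ m, ∃ ψ : ℝ →ₗ[ℚ] ℝ, ∀ j,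
      a m j = c j * Complex.exp (Complex.I * (ψ (lam j) : ℂ))) :
    ∃ (b : Fin n → ℂ) (φ : ℕ → ℕ), StrictMono φ ∧
      (∃ ψ : ℝ →ₗ[ℚ] ℝ, ∀ j, b j = c j * Complex.exp (Complex.I * (ψ (lam j) : ℂ))) ∧
      TendstoUniformly
        (fun m t => ∑ j, a (φ m) j * Complex.exp (Complex.I * (lam j * t : ℝ)))
        (fun t => ∑ j, b j * Complex.exp (Complex.I * (lam j * t : ℝ)))
        Filter.atTop := by
  have hexp (x : ℝ) : Complex.exp (Complex.I * x) = Circle.exp x := by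
    rw [Circle.coe_exp, mul_comm]
  choose ψ hψ using ha
  obtain ⟨v, ⟨ψv, hψv⟩, φ, hφ, hconv⟩ := (isCompact_rationalPhases lam).tendsto_subseq
    (x := fun m j => Circle.exp (ψ m (lam j))) fun m => ⟨ψ m, fun j => rfl⟩
  refine ⟨fun j => c j * v j, φ, hφ, ⟨ψv, fun j => by rw [hexp, ← hψv]⟩, ?_⟩
  have hcoef : Tendsto (fun m => a (φ m)) atTop (𝓝 fun j => c j * v j) :=
    tendsto_pi_nhds.2 fun j => by
      simp only [hψ, hexp]
      exact tendsto_const_nhds.mul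
        ((continuous_subtype_val.tendsto _).comp (tendsto_pi_nhds.1 hconv j))
  exact tendstoUniformly_sum_mul_of_tendsto
    (fun j t => (Complex.norm_exp_I_mul_ofReal (lam j * t)).le) hcoef

/-- Equivalence classes of trigonometric polynomials with a fixed finite set of exponents
are sequentially compact for uniform convergence on ℝ. -/
theorem equivalence_class_seq_compact
    (n : ℕ) (lam : Fin n → ℝ) (hlam : Function.Injective lam)
    (c : Fin n → ℂ) (a : ℕ → Fin n → ℂ)
    (ha : ∀ m, ∃ ψ : ℝ →ₗ[ℚ] ℝ, ∀ j,
      a m j = c j * Complex.exp (Complex.I * (ψ (lam j) : ℂ))) :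
    ∃ (b : Fin n → ℂ) (φ : ℕ → ℕ), StrictMono φ ∧
      (∃ ψ : ℝ →ₗ[ℚ] ℝ, ∀ j, b j = c j * Complex.exp (Complex.I * (ψ (lam j) : ℂ))) ∧
      TendstoUniformly
        (fun m t => ∑ j, a (φ m) j * Complex.exp (Complex.I * (lam j * t : ℝ)))
        (fun t => ∑ j, b j * Complex.exp (Complex.I * (lam j * t : ℝ)))
        Filter.atTop :=
  equivalence_class_seq_compact_general n lam c a ha
end

section
/- Let (f_m) be a sequence of trigonometric polynomials with common distinct real exponents {λ₁,…,λₙ}, all equivalent (∼*) to a fixed trigonometric polynomial f, and suppose f_m → g uniformly on ℝ where g(t) = Σ_{j=1}^n c_j e^{i λ_j t} is a trigonometric polynomial. Then g is equivalent to f. -/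
/-!
Since exponentials with distinct frequencies are linearly independent, the uniform norm on their
finite-dimensional span controls the coefficients, so `a m → c`. It therefore suffices that the
`∼*`-class of `f` is closed. It is the image, under `z ↦ (f j * z j)_j`, of the set of points
`(exp (i ψ (λ j)))_j` of the compact torus, and that set is closed: it consists exactly of the `z`
with `∏ z_j ^ r_j = 1` for every integer relation `∑ r_j λ_j = 0`. For the converse inclusion,
such a `z` defines a character of the free abelian group `∑ ℤ λ_j`; lifting its values on a
`ℤ`-basis to angles and extending `ℚ`-linearly (a `ℤ`-basis of a subgroup of `ℝ` is
`ℚ`-linearly independent) gives `ψ`.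
-/

open Filter Topology Function Set Submodule BoundedContinuousFunction

theorem AddChar.linearIndependent' (A L : Type*) [AddMonoid A] [CommRing L] [IsDomain L] :
    LinearIndependent L ((⇑) : AddChar A L → A → L) :=
  (linearIndependent_monoidHom (Multiplicative A) L).comp AddChar.toMonoidHom
    AddChar.toMonoidHomEquiv.injective

theorem LinearIndependent.tendsto_of_tendsto_sum_smul {ι α 𝕜 F : Type*} [Fintype ι]
    [NontriviallyNormedField 𝕜] [CompleteSpace 𝕜] [NormedAddCommGroup F] [NormedSpace 𝕜 F]
    {v : ι → F} (hv : LinearIndependent 𝕜 v) {l : Filter α} {a : α → ι → 𝕜} {c : ι → 𝕜}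
    (h : Tendsto (fun m => ∑ i, a m i • v i) l (𝓝 (∑ i, c i • v i))) :
    Tendsto a l (𝓝 c) := by
  set L := Fintype.linearCombination 𝕜 v
  have hL : Injective L := linearIndependent_iff_injective_fintypeLinearCombination.mp hv
  obtain ⟨K, -, hK⟩ := L.injective_iff_antilipschitz.mp hL
  have hLu : IsUniformInducing L :=
    hK.isUniformInducing (LinearMap.toContinuousLinearMap L).uniformContinuous
  rw [hLu.isInducing.tendsto_nhds_iff]
  simpa [L, comp_def, Fintype.linearCombination_apply] using h

noncomputable def expChar (lam : ℝ) : AddChar ℝ ℂ where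
  toFun t := Complex.exp (Complex.I * (lam * t : ℝ))
  map_zero_eq_one' := by simp
  map_add_eq_mul' s t := by rw [← Complex.exp_add]; push_cast; ring_nf

theorem expChar_injective : Injective expChar := by
  intro l l' h
  by_contra hne
  set t := Real.pi / (l - l')
  have hd : ((l : ℂ) - l') ≠ 0 := sub_ne_zero.mpr (by exact_mod_cast hne)
  have hquot : expChar l t / expChar l' t = Complex.exp (Real.pi * Complex.I) := by
    simp only [expChar, AddChar.coe_mk, ← Complex.exp_sub, t]
    congr 1; push_cast; field_simp
  have hne0 : expChar l' t ≠ 0 := Complex.exp_ne_zero _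
  rw [h, div_self hne0, Complex.exp_pi_mul_I] at hquot
  norm_num at hquot

noncomputable def expBCF (lam : ℝ) : ℝ →ᵇ ℂ :=
  .ofNormedAddCommGroup (expChar lam) (by simp only [expChar, AddChar.coe_mk]; fun_prop) 1
    fun t => by simp [expChar, Complex.norm_exp]

theorem tendsto_coeff_of_tendstoUniformly {ι α : Type*} [Fintype ι] {lam : ι → ℝ}
    (hlam : Injective lam) {l : Filter α} {a : α → ι → ℂ} {c : ι → ℂ}
    (h : TendstoUniformly (fun m t => ∑ j, a m j * Complex.exp (Complex.I * (lam j * t : ℝ)))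
      (fun t => ∑ j, c j * Complex.exp (Complex.I * (lam j * t : ℝ))) l) :
    Tendsto a l (𝓝 c) := by
  have hchar : LinearIndependent ℂ (fun j => ⇑(expChar (lam j))) :=
    (AddChar.linearIndependent' ℝ ℂ).comp _ (expChar_injective.comp hlam)
  have hind : LinearIndependent ℂ (expBCF ∘ lam) :=
    .of_comp (ContinuousMap.coeFnLinearMap ℂ ∘ₗ toContinuousMapLinearMap ℝ ℂ ℂ) hchar
  refine hind.tendsto_of_tendsto_sum_smul ?_
  rw [BoundedContinuousFunction.tendsto_iff_tendstoUniformly]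
  simpa [expBCF, expChar, Finset.sum_fn] using h

theorem exists_linearMap_span_apply_eq {R M A ι : Type*} [Ring R] [AddCommGroup M] [Module R M]
    [AddCommGroup A] [Module R A] [Fintype ι] {v : ι → M} {w : ι → A}
    (h : ∀ r : ι → R, ∑ i, r i • v i = 0 → ∑ i, r i • w i = 0) :
    ∃ χ : span R (range v) →ₗ[R] A, ∀ i, χ ⟨v i, subset_span (mem_range_self i)⟩ = w i := by
  classical
  let g : (ι → R) →ₗ[R] span R (range v) :=
    (Fintype.linearCombination R v).codRestrict _ fun r => by
      rw [← Fintype.range_linearCombination]; exact LinearMap.mem_range_self _ r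
  have hg : Surjective g := by
    rintro ⟨x, hx⟩
    rw [← Fintype.range_linearCombination] at hx
    obtain ⟨r, rfl⟩ := hx
    exact ⟨r, rfl⟩
  have hker : LinearMap.ker g ≤ LinearMap.ker (Fintype.linearCombination R w) := fun r hr => by
    simp only [LinearMap.mem_ker, Fintype.linearCombination_apply] at hr ⊢
    exact h r (congrArg Subtype.val hr)
  refine ⟨(LinearMap.ker g).liftQ _ hker ∘ₗ (g.quotKerEquivOfSurjective hg).symm, fun i => ?_⟩
  have hvi : g (Pi.single i 1) = ⟨v i, subset_span (mem_range_self i)⟩ :=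
    Subtype.ext (Fintype.linearCombination_apply_single R v i 1 |>.trans (one_smul R _))
  rw [LinearMap.comp_apply, ← hvi, LinearEquiv.coe_coe,
    LinearMap.quotKerEquivOfSurjective_symm_apply, liftQ_apply,
    Fintype.linearCombination_apply_single, one_smul]

theorem Circle.exp_sum {ι : Type*} (s : Finset ι) (f : ι → ℝ) :
    Circle.exp (∑ i ∈ s, f i) = ∏ i ∈ s, Circle.exp (f i) :=
  congrArg Additive.toMul (map_sum Circle.expHom f s)

theorem exists_ratLinearMap_circleExp_eq {M : Submodule ℤ ℝ} [Module.Finite ℤ M]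
    (χ : M →ₗ[ℤ] Additive Circle) :
    ∃ ψ : ℝ →ₗ[ℚ] ℝ, ∀ x : M, Circle.exp (ψ x) = (χ x).toMul := by
  let b := Module.Free.chooseBasis ℤ M
  have hb : LinearIndependent ℚ (fun k => (b k : ℝ)) :=
    (LinearIndependent.iff_fractionRing ℤ ℚ).mp (b.linearIndependent.map' M.subtype M.ker_subtype)
  choose θ hθ using fun k => Circle.exp_surjective (χ (b k)).toMul
  obtain ⟨ψ, hψ⟩ := LinearMap.exists_extend ((Module.Basis.span hb).constr ℚ θ)
  have hψb : ∀ k, ψ (b k) = θ k := fun k => by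
    have := LinearMap.congr_fun hψ (Module.Basis.span hb k)
    rwa [Module.Basis.constr_basis, LinearMap.comp_apply, Module.Basis.span_apply] at this
  have hext : Circle.expHom.toIntLinearMap ∘ₗ ψ.restrictScalars ℤ ∘ₗ M.subtype = χ :=
    b.ext fun k => by simp [hψb, hθ]
  exact ⟨ψ, fun x => congrArg Additive.toMul (LinearMap.congr_fun hext x)⟩

theorem exists_ratLinearMap_circleExp_eq_of_relations {ι : Type*} [Fintype ι] {l : ι → ℝ}
    {z : ι → Circle} (h : ∀ r : ι → ℤ, ∑ i, r i • l i = 0 → ∏ i, z i ^ r i = 1) :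
    ∃ ψ : ℝ →ₗ[ℚ] ℝ, ∀ i, Circle.exp (ψ (l i)) = z i := by
  obtain ⟨χ, hχ⟩ := exists_linearMap_span_apply_eq (R := ℤ) (v := l) (w := Additive.ofMul ∘ z)
    fun r hr => by simp [← ofMul_zpow, ← ofMul_prod, h r hr]
  have : Module.Finite ℤ (span ℤ (range l)) := .span_of_finite ℤ (finite_range l)
  obtain ⟨ψ, hψ⟩ := exists_ratLinearMap_circleExp_eq χ
  exact ⟨ψ, fun i => (hψ _).trans (congrArg Additive.toMul (hχ i))⟩

theorem isClosed_range_circleExp_ratLinearMap {ι : Type*} [Fintype ι] (l : ι → ℝ) :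
    IsClosed (range fun (ψ : ℝ →ₗ[ℚ] ℝ) i => Circle.exp (ψ (l i))) := by
  have hrange : (range fun (ψ : ℝ →ₗ[ℚ] ℝ) i => Circle.exp (ψ (l i))) =
      ⋂ r ∈ {r : ι → ℤ | ∑ i, r i • l i = 0}, {z | ∏ i, z i ^ r i = 1} := by
    ext z
    simp only [mem_range, mem_iInter, mem_ofPred_eq]
    constructor
    · rintro ⟨ψ, rfl⟩ r hr
      simp_rw [← Circle.exp_zsmul, ← map_zsmul ψ, ← Circle.exp_sum, ← map_sum, hr, map_zero,
        Circle.exp_zero]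
    · intro h
      obtain ⟨ψ, hψ⟩ := exists_ratLinearMap_circleExp_eq_of_relations h
      exact ⟨ψ, funext hψ⟩
  rw [hrange]
  exact isClosed_biInter fun r _ => isClosed_eq (by fun_prop) continuous_const

theorem isClosed_setOf_exists_ratLinearMap {ι : Type*} [Fintype ι] (l : ι → ℝ) (f : ι → ℂ) :
    IsClosed {c : ι → ℂ | ∃ ψ : ℝ →ₗ[ℚ] ℝ, ∀ j,
      c j = f j * Complex.exp (Complex.I * (ψ (l j) : ℂ))} := by
  have hset : {c : ι → ℂ | ∃ ψ : ℝ →ₗ[ℚ] ℝ, ∀ j,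
      c j = f j * Complex.exp (Complex.I * (ψ (l j) : ℂ))} =
      (fun z j => f j * (z j : ℂ)) '' range fun (ψ : ℝ →ₗ[ℚ] ℝ) i => Circle.exp (ψ (l i)) := by
    rw [← range_comp]
    ext c
    simp [funext_iff, eq_comm, Circle.coe_exp, mul_comm Complex.I]
  rw [hset]
  exact ((isClosed_range_circleExp_ratLinearMap l).isCompact.image (by fun_prop)).isClosed

theorem uniform_limit_of_equivalent_is_equivalent
    (n : ℕ) (lam : Fin n → ℝ) (hlam : Function.Injective lam)
    (f : Fin n → ℂ) (a : ℕ → Fin n → ℂ) (c : Fin n → ℂ)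
    (ha : ∀ m, ∃ ψ : ℝ →ₗ[ℚ] ℝ, ∀ j,
      a m j = f j * Complex.exp (Complex.I * (ψ (lam j) : ℂ)))
    (hconv : TendstoUniformly
      (fun m t => ∑ j, a m j * Complex.exp (Complex.I * (lam j * t : ℝ)))
      (fun t => ∑ j, c j * Complex.exp (Complex.I * (lam j * t : ℝ)))
      Filter.atTop) :
    ∃ ψ : ℝ →ₗ[ℚ] ℝ, ∀ j, c j = f j * Complex.exp (Complex.I * (ψ (lam j) : ℂ)) :=
  (isClosed_setOf_exists_ratLinearMap lam f).mem_of_tendsto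
    (tendsto_coeff_of_tendstoUniformly hlam hconv) (Eventually.of_forall ha)
end
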